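/- Let E be a compact subset of a Hausdorff locally convex topological vector space such that the closed convex hull of E is compact. Then every extreme point of the closed convex hull of E belongs to E. -/

import Mathlib

/-- Extreme points of a set `E` in a real vector space, with the `t ∈ (0,1)` definition. -/
def extremePtsR {V : Type*} [AddCommGroup V] [Module ℝ V] (E : Set V) : Set V :=
  {v | v ∈ E ∧ ∀ x ∈ E, ∀ y ∈ E, ∀ t : ℝ, 0 < t → t < 1 →
    t • x + (1 - t) • y = v → x = v ∧ y = v}

/-!
Cover the compact set `E` by finitely many closed convex neighbourhoods `C z` of its points.
The closed convex hulls of the pieces `E ∩ C z` are compact and convex, so the convex hull of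
their union is compact, hence closed, and therefore contains the closed convex hull `K` of `E`.
An extreme point of a convex set `K` that lies in the convex hull of a subset of `K` lies in
that subset, so it lies in one of the pieces' hulls, hence in some `C z`. Shrinking the
neighbourhoods puts it in the closure of `E`, which is `E`.
-/

open Set Topology Pointwise

theorem extremePtsR_eq_extremePoints {V : Type*} [AddCommGroup V] [Module ℝ V] (A : Set V) :
    extremePtsR A = A.extremePoints ℝ := by
  ext v
  rw [mem_extremePoints]
  refine and_congr_right fun _ ↦ forall₄_congr fun x _ y _ ↦ ⟨?_, ?_⟩
  · rintro h ⟨a, b, ha, hb, hab, rfl⟩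
    obtain rfl : b = 1 - a := by linarith
    exact h a ha (by linarith) rfl
  · intro h t ht0 ht1 hv
    exact h ⟨t, 1 - t, ht0, by linarith, by ring, hv⟩

theorem Set.mem_of_mem_extremePoints_of_mem_convexHull {𝕜 V : Type*} [Field 𝕜] [LinearOrder 𝕜]
    [IsStrictOrderedRing 𝕜] [AddCommGroup V] [Module 𝕜 V] {K s : Set V} {x : V}
    (hK : Convex 𝕜 K) (hx : x ∈ K.extremePoints 𝕜) (hsK : s ⊆ K) (hxs : x ∈ convexHull 𝕜 s) :
    x ∈ s :=
  extremePoints_convexHull_subset <|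
    inter_extremePoints_subset_extremePoints_of_subset (convexHull_min hsK hK) ⟨hxs, hx⟩

section Compact

variable {𝕜 V : Type*} [Field 𝕜] [LinearOrder 𝕜] [IsStrictOrderedRing 𝕜] [TopologicalSpace 𝕜]
  [CompactIccSpace 𝕜] [AddCommGroup V] [Module 𝕜 V] [TopologicalSpace V]
  [IsTopologicalAddGroup V] [ContinuousSMul 𝕜 V]

theorem IsCompact.convexJoin {s t : Set V} (hs : IsCompact s) (ht : IsCompact t) :
    IsCompact (_root_.convexJoin 𝕜 s t) := by
  have : _root_.convexJoin 𝕜 s t =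
      (fun p : 𝕜 × V × V ↦ p.2.1 + p.1 • (p.2.2 - p.2.1)) '' Icc 0 1 ×ˢ s ×ˢ t := by
    ext x
    simp only [mem_convexJoin, segment_eq_image', mem_image, mem_prod, Prod.exists]
    constructor
    · rintro ⟨a, ha, b, hb, θ, hθ, rfl⟩
      exact ⟨θ, a, b, ⟨hθ, ha, hb⟩, rfl⟩
    · rintro ⟨θ, a, b, ⟨hθ, ha, hb⟩, rfl⟩
      exact ⟨a, ha, b, hb, θ, hθ, rfl⟩
  rw [this]
  exact (isCompact_Icc.prod (hs.prod ht)).image (by fun_prop)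

theorem IsCompact.convexHull_union {s t : Set V} (hs : IsCompact (convexHull 𝕜 s))
    (ht : IsCompact (convexHull 𝕜 t)) : IsCompact (convexHull 𝕜 (s ∪ t)) := by
  rcases s.eq_empty_or_nonempty with rfl | hs₀
  · simpa using ht
  rcases t.eq_empty_or_nonempty with rfl | ht₀
  · simpa using hs
  rw [_root_.convexHull_union hs₀ ht₀]
  exact hs.convexJoin ht

theorem isCompact_convexHull_biUnion {ι : Type*} {s : Finset ι} {A : ι → Set V}
    (hA : ∀ i ∈ s, IsCompact (convexHull 𝕜 (A i))) :
    IsCompact (convexHull 𝕜 (⋃ i ∈ s, A i)) := by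
  classical
  induction s using Finset.induction with
  | empty => simp
  | insert a s _ ih =>
    rw [Finset.set_biUnion_insert]
    exact (hA a (s.mem_insert_self a)).convexHull_union
      (ih fun i hi ↦ hA i (Finset.mem_insert_of_mem hi))

end Compact

theorem exists_mem_of_mem_extremePoints_closedConvexHull {V : Type*} [AddCommGroup V]
    [Module ℝ V] [TopologicalSpace V] [IsTopologicalAddGroup V] [ContinuousSMul ℝ V] [T2Space V]
    {E : Set V} (hE : IsCompact E) (hK : IsCompact (closedConvexHull ℝ E)) {x : V}
    (hx : x ∈ (closedConvexHull ℝ E).extremePoints ℝ) (C : V → Set V)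
    (hC : ∀ z ∈ E, C z ∈ 𝓝 z) (hC_closed : ∀ z ∈ E, IsClosed (C z))
    (hC_convex : ∀ z ∈ E, Convex ℝ (C z)) : ∃ z ∈ E, x ∈ C z := by
  obtain ⟨t, htE, hEt⟩ := hE.elim_nhds_subcover C hC
  set A := fun z ↦ closedConvexHull ℝ (E ∩ C z)
  have hAK (z : V) : A z ⊆ closedConvexHull ℝ E :=
    (closedConvexHull ℝ).monotone inter_subset_left
  have hAC (z : V) (hz : z ∈ E) : A z ⊆ C z :=
    closedConvexHull_min inter_subset_right (hC_convex z hz) (hC_closed z hz)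
  have hEA : E ⊆ ⋃ z ∈ t, A z := fun e he ↦ by
    obtain ⟨z, hz, hez⟩ := mem_iUnion₂.1 (hEt he)
    exact mem_biUnion hz (subset_closedConvexHull ⟨he, hez⟩)
  have hA_compact : IsCompact (convexHull ℝ (⋃ z ∈ t, A z)) :=
    isCompact_convexHull_biUnion fun z _ ↦ by
      rw [convex_closedConvexHull.convexHull_eq]
      exact hK.of_isClosed_subset isClosed_closedConvexHull (hAK z)
  have hKA : closedConvexHull ℝ E ⊆ convexHull ℝ (⋃ z ∈ t, A z) :=
    closedConvexHull_min (hEA.trans (subset_convexHull ℝ _)) (convex_convexHull ℝ _)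
      hA_compact.isClosed
  obtain ⟨z, hz, hxz⟩ := mem_iUnion₂.1 <| mem_of_mem_extremePoints_of_mem_convexHull
    convex_closedConvexHull hx (iUnion₂_subset fun z _ ↦ hAK z) (hKA hx.1)
  exact ⟨z, htE z hz, hAC z (htE z hz) hxz⟩

theorem milman_extremePoints_closedConvexHull_subset
    {V : Type*} [AddCommGroup V] [Module ℝ V] [TopologicalSpace V]
    [IsTopologicalAddGroup V] [ContinuousSMul ℝ V] [LocallyConvexSpace ℝ V] [T2Space V]
    (E : Set V) (hE : IsCompact E) (hconv : IsCompact (closure (convexHull ℝ E))) :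
    extremePtsR (closure (convexHull ℝ E)) ⊆ E := by
  intro x hx
  rw [← closedConvexHull_eq_closure_convexHull] at hconv hx
  rw [extremePtsR_eq_extremePoints] at hx
  rw [← hE.isClosed.closure_eq, mem_closure_iff_nhds_zero]
  intro U hU
  obtain ⟨D, ⟨hD, hD_closed, hD_balanced, hD_convex⟩, hDU⟩ :=
    (nhds_hasBasis_absConvex_closed ℝ V).mem_iff.1 hU
  obtain ⟨z, hzE, hxz⟩ := exists_mem_of_mem_extremePoints_closedConvexHull hE hconv hx
    (fun z ↦ z +ᵥ D) (fun z _ ↦ by simpa using vadd_mem_nhds_vadd z hD)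
    (fun z _ ↦ hD_closed.vadd z) (fun z _ ↦ hD_convex.vadd z)
  rw [mem_vadd_set_iff_neg_vadd_mem, vadd_eq_add, neg_add_eq_sub] at hxz
  exact ⟨z, hzE, hDU (by simpa using hD_balanced.neg_mem_iff.2 hxz)⟩
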